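/- arXiv:1605.04680 — 2 statements merged into one kernel-verified Lean document; each statement's English description precedes it below -/
import Mathlib

section
/- If a, b are real numbers with 250047·b^4 - 222804·a^3·b^2 + 132496·a^6 = 0, then a = 0 and b = 0. In particular this equation has no nonzero rational solutions. -/
theorem stmt_4 (a b : ℝ)
    (h : 250047 * b ^ 4 - 222804 * a ^ 3 * b ^ 2 + 132496 * a ^ 6 = 0) :
    a = 0 ∧ b = 0 := by
  have key : (250047 * b ^ 2 - 111402 * a ^ 3) ^ 2 + 20719821708 * a ^ 6 = 0 := by
    nlinarith [h]
  have h6 : a ^ 6 = (a ^ 3) ^ 2 := by ring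
  have ha6 : a ^ 6 = 0 := by
    nlinarith [sq_nonneg (250047 * b ^ 2 - 111402 * a ^ 3), sq_nonneg (a ^ 3)]
  have ha : a = 0 := by
    have := pow_eq_zero_iff (n := 6) (by norm_num) |>.mp ha6
    exact this
  subst ha
  have hb : b ^ 2 = 0 := by nlinarith [key]
  exact ⟨rfl, pow_eq_zero_iff (n := 2) (by norm_num) |>.mp hb⟩
end

section
/- Let a, b be rational numbers and τ a real number with τ ≠ 0 such that 21τ^5 + 35aτ^3 + 21bτ^2 + 7a^2τ + 2ab = 0, 15τ^4 + 15aτ^2 + 6bτ + a^2 = 0. Then there exists a nonzero rational number k with a = -6k^2, b = 7k^3, and τ = 2k. -/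
/-!
The second equation is `f'(τ) / 7 = 0` for the quintic `f` of the first, so `τ` is a double root
of `f`. Eliminating `τ` (a resultant computation) leaves `9 a (49 a³ + 216 b²) Q(a, b) = 0`, where
the quartic `Q = 132496 a⁶ - 222804 a³ b² + 250047 b⁴` is positive definite in `(a³, b²)`. As `a = 0`
would force `τ = 0`, we get `49 a³ + 216 b² = 0`, which over `ℚ` is parametrized by
`a = -6 k²`, `b = 7 k³` with `k = -6 b / (7 a)`. For these coefficients `f = 21 (τ - 2k)² q(τ)` with
`q(2k) ≠ 0`, so the double root is `τ = 2k`.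
-/

section

variable {K : Type*}

def quintic [CommRing K] (a b τ : K) : K :=
  21 * τ ^ 5 + 35 * a * τ ^ 3 + 21 * b * τ ^ 2 + 7 * a ^ 2 * τ + 2 * a * b

def quinticDerivDivSeven [CommRing K] (a b τ : K) : K :=
  15 * τ ^ 4 + 15 * a * τ ^ 2 + 6 * b * τ + a ^ 2

theorem ne_zero_of_quintic_eq_zero_of_deriv_eq_zero [Field K] [CharZero K] {a b τ : K}
    (hτ : τ ≠ 0) (hf : quintic a b τ = 0) (hg : quinticDerivDivSeven a b τ = 0) : a ≠ 0 := by
  rintro rfl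
  simp only [quintic, quinticDerivDivSeven] at hf hg
  have : 189 * τ ^ 5 = 0 := by linear_combination 21 * τ * hg - 6 * hf
  simp_all

theorem resultant_quintic_deriv_eq_zero [CommRing K] {a b τ : K}
    (hf : quintic a b τ = 0) (hg : quinticDerivDivSeven a b τ = 0) :
    9 * a * (49 * a ^ 3 + 216 * b ^ 2) *
      (132496 * a ^ 6 - 222804 * a ^ 3 * b ^ 2 + 250047 * b ^ 4) = 0 := by
  simp only [quintic, quinticDerivDivSeven] at hf hg
  linear_combination
    ((-6667920 * a ^ 6 * b - 5347215 * a ^ 3 * b ^ 3 + 243045684 * b ^ 5)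
      + (-192628800 * a ^ 7 - 672728490 * a ^ 4 * b ^ 2 + 511167510 * a * b ^ 4) * τ
      + (117879300 * a ^ 5 * b + 208738215 * a ^ 2 * b ^ 3) * τ ^ 2
      + (-216707400 * a ^ 6 - 636088950 * a ^ 3 * b ^ 2 + 607614210 * b ^ 4) * τ ^ 3) * hf
    + ((58430736 * a ^ 8 + 172651500 * a ^ 5 * b ^ 2 - 312165819 * a ^ 2 * b ^ 4)
      + (81348624 * a ^ 6 * b + 346978485 * a ^ 3 * b ^ 3 - 850659894 * b ^ 5) * τ
      + (471940560 * a ^ 7 + 1535502906 * a ^ 4 * b ^ 2 - 1282741110 * a * b ^ 4) * τ ^ 2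
      + (-165031020 * a ^ 5 * b - 292233501 * a ^ 2 * b ^ 3) * τ ^ 3
      + (303390360 * a ^ 6 + 890524530 * a ^ 3 * b ^ 2 - 850659894 * b ^ 4) * τ ^ 4) * hg

theorem resultant_quartic_factor_pos [Field K] [LinearOrder K] [IsStrictOrderedRing K]
    {a : K} (ha : a ≠ 0) (b : K) :
    0 < 132496 * a ^ 6 - 222804 * a ^ 3 * b ^ 2 + 250047 * b ^ 4 := by
  have ha6 : 0 < a ^ 6 := by positivity
  nlinarith [sq_nonneg (2 * 250047 * b ^ 2 - 222804 * a ^ 3), sq_nonneg b]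

theorem cubic_relation_of_quintic_eq_zero_of_deriv_eq_zero
    [Field K] [LinearOrder K] [IsStrictOrderedRing K] {a b τ : K} (ha : a ≠ 0)
    (hf : quintic a b τ = 0) (hg : quinticDerivDivSeven a b τ = 0) :
    49 * a ^ 3 + 216 * b ^ 2 = 0 := by
  have hres := resultant_quintic_deriv_eq_zero hf hg
  have hQ := resultant_quartic_factor_pos ha b
  simp_all [hQ.ne']

theorem exists_eq_neg_six_mul_sq_of_cubic_relation [Field K] [CharZero K] {a b : K}
    (ha : a ≠ 0) (h : 49 * a ^ 3 + 216 * b ^ 2 = 0) :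
    ∃ k : K, k ≠ 0 ∧ a = -6 * k ^ 2 ∧ b = 7 * k ^ 3 := by
  have hb : b ≠ 0 := by
    rintro rfl
    simp_all
  refine ⟨-6 * b / (7 * a), by simp [ha, hb], ?_, ?_⟩
  · field_simp
    linear_combination h
  · field_simp
    linear_combination h

theorem eq_two_mul_of_quintic_eq_zero_of_deriv_eq_zero [Field K] [CharZero K] {k τ : K}
    (hk : k ≠ 0) (hf : quintic (-6 * k ^ 2) (7 * k ^ 3) τ = 0)
    (hg : quinticDerivDivSeven (-6 * k ^ 2) (7 * k ^ 3) τ = 0) : τ = 2 * k := by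
  simp only [quintic, quinticDerivDivSeven] at hf hg
  have : (τ - 2 * k) * (2122848 * k ^ 6) = 0 := by
    linear_combination (-14800 * τ ^ 2 - 25600 * τ * k + 26400 * k ^ 2) * hf +
      (20720 * τ ^ 3 + 35840 * τ ^ 2 * k - 119840 * τ * k ^ 2 - 56336 * k ^ 3) * hg
  have : τ - 2 * k = 0 := by simpa [hk] using this
  linear_combination this

end

theorem stmt_12 (a b : ℚ) (τ : ℝ) (hτ : τ ≠ 0)
    (hf : 21 * τ ^ 5 + 35 * (a : ℝ) * τ ^ 3 + 21 * (b : ℝ) * τ ^ 2 +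
        7 * (a : ℝ) ^ 2 * τ + 2 * (a : ℝ) * (b : ℝ) = 0)
    (hg : 15 * τ ^ 4 + 15 * (a : ℝ) * τ ^ 2 + 6 * (b : ℝ) * τ + (a : ℝ) ^ 2 = 0) :
    ∃ k : ℚ, k ≠ 0 ∧ a = -6 * k ^ 2 ∧ b = 7 * k ^ 3 ∧ τ = 2 * (k : ℝ) := by
  change quintic (a : ℝ) b τ = 0 at hf
  change quinticDerivDivSeven (a : ℝ) b τ = 0 at hg
  have ha : (a : ℝ) ≠ 0 := ne_zero_of_quintic_eq_zero_of_deriv_eq_zero hτ hf hg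
  have hcubic : 49 * a ^ 3 + 216 * b ^ 2 = 0 := by
    exact_mod_cast cubic_relation_of_quintic_eq_zero_of_deriv_eq_zero ha hf hg
  obtain ⟨k, hk, rfl, rfl⟩ :=
    exists_eq_neg_six_mul_sq_of_cubic_relation (Rat.cast_ne_zero.mp ha) hcubic
  push_cast at hf hg
  exact ⟨k, hk, rfl, rfl, eq_two_mul_of_quintic_eq_zero_of_deriv_eq_zero (by exact_mod_cast hk) hf hg⟩
end
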